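/- arXiv:2009.07261 — 3 statements merged into one kernel-verified Lean document; each statement's English description precedes it below -/
import Mathlib

section
/- Let n ≥ 3 and k ≥ 0 be integers and let L > 1 be a real number. A real number σ has the property that there exist real numbers a, b, not both zero, such that the function u(r) = a·r^k + b·r^{2−n−k} satisfies u(L) = 0 and u′(1) = −σ·u(1), if and only if σ = (k + (n+k−2)·L^{2k+n−2})/(L^{2k+n−2} − 1). -/
/-!
The two boundary conditions `u(L) = 0` and `u'(1) + σ u(1) = 0` form a homogeneous linear system
in `(a, b)`, which has a nonzero solution iff its determinant
`L^k (2 - n - k + σ) - L^(2-n-k) (k + σ)` vanishes. Dividing by `L^(2-n-k)` turns this into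
`σ (L^(2k+n-2) - 1) = k + (n + k - 2) L^(2k+n-2)`, and `L^(2k+n-2) ≠ 1` because `L > 1`.
-/

theorem exists_ne_zero_pair_linear_eqs_iff {K : Type*} [Field K] (p q r s : K) :
    (∃ a b : K, ¬(a = 0 ∧ b = 0) ∧ p * a + q * b = 0 ∧ r * a + s * b = 0) ↔
      p * s - q * r = 0 := by
  rw [← Matrix.det_fin_two_of, ← Matrix.exists_mulVec_eq_zero_iff]
  constructor
  · rintro ⟨a, b, hab, h₁, h₂⟩
    refine ⟨![a, b], fun h => hab ⟨congrFun h 0, congrFun h 1⟩, ?_⟩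
    ext i; fin_cases i <;> simp [Matrix.mulVec, dotProduct, Fin.sum_univ_two, h₁, h₂]
  · rintro ⟨v, hv, h⟩
    refine ⟨v 0, v 1, fun h01 => hv ?_, ?_, ?_⟩
    · ext i; fin_cases i <;> simp [h01]
    · simpa [Matrix.mulVec, dotProduct, Fin.sum_univ_two] using congrFun h 0
    · simpa [Matrix.mulVec, dotProduct, Fin.sum_univ_two] using congrFun h 1

theorem deriv_const_mul_zpow_add_const_mul_zpow_one (a b : ℝ) (m₁ m₂ : ℤ) :
    deriv (fun r : ℝ => a * r ^ m₁ + b * r ^ m₂) 1 = a * m₁ + b * m₂ := by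
  have h₁ := (hasDerivAt_zpow m₁ (1 : ℝ) (Or.inl one_ne_zero)).const_mul a
  have h₂ := (hasDerivAt_zpow m₂ (1 : ℝ) (Or.inl one_ne_zero)).const_mul b
  have h := (h₁.add h₂).deriv
  simp only [one_zpow, mul_one] at h
  exact h

theorem exists_ne_zero_zpow_comb_iff {K : Type*} [Field K] {L : K} (hL : L ≠ 0) {m₁ m₂ : ℤ}
    (hT : L ^ (m₁ - m₂) ≠ 1) (σ : K) :
    (∃ a b : K, ¬(a = 0 ∧ b = 0) ∧ a * L ^ m₁ + b * L ^ m₂ = 0 ∧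
        a * m₁ + b * m₂ = -σ * (a + b)) ↔
      σ = (m₁ - m₂ * L ^ (m₁ - m₂)) / (L ^ (m₁ - m₂) - 1) := by
  have hsplit : L ^ m₁ = L ^ (m₁ - m₂) * L ^ m₂ := by
    rw [← zpow_add₀ hL, sub_add_cancel]
  calc _ ↔ ∃ a b : K, ¬(a = 0 ∧ b = 0) ∧ L ^ m₁ * a + L ^ m₂ * b = 0 ∧
          (m₁ + σ) * a + (m₂ + σ) * b = 0 := by
        refine exists₂_congr fun a b => and_congr_right' (and_congr ?_ ?_)
        · rw [mul_comm a, mul_comm b]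
        · constructor <;> intro h <;> linear_combination h
    _ ↔ L ^ m₁ * (m₂ + σ) - L ^ m₂ * (m₁ + σ) = 0 := exists_ne_zero_pair_linear_eqs_iff ..
    _ ↔ L ^ m₂ * (σ * (L ^ (m₁ - m₂) - 1) - (m₁ - m₂ * L ^ (m₁ - m₂))) = 0 := by
        rw [hsplit]
        constructor <;> intro h <;> linear_combination h
    _ ↔ _ := by
        rw [mul_eq_zero, or_iff_right (zpow_ne_zero m₂ hL), sub_eq_zero,
          eq_div_iff (sub_ne_zero.mpr hT)]

/-- Characterization of the mixed Steklov–Dirichlet eigenvalues on the annulus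
`B_L \ B̄_1 ⊂ ℝⁿ`: a real number `σ` admits a nonzero radial part
`u(r) = a·r^k + b·r^(2−n−k)` with `u(L) = 0` and `u′(1) = −σ·u(1)` iff
`σ = (k + (n+k−2)·L^(2k+n−2)) / (L^(2k+n−2) − 1)`. -/
theorem stmt_0 (n k : ℕ) (hn : 3 ≤ n) (L : ℝ) (hL : 1 < L) (σ : ℝ) :
    (∃ a b : ℝ, ¬ (a = 0 ∧ b = 0) ∧
      a * L ^ (k : ℤ) + b * L ^ ((2 : ℤ) - n - k) = 0 ∧
      deriv (fun r : ℝ => a * r ^ (k : ℤ) + b * r ^ ((2 : ℤ) - n - k)) 1 =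
        -σ * (a * (1 : ℝ) ^ (k : ℤ) + b * (1 : ℝ) ^ ((2 : ℤ) - n - k))) ↔
    σ = ((k : ℝ) + ((n : ℝ) + k - 2) * L ^ (2 * (k : ℤ) + n - 2)) /
        (L ^ (2 * (k : ℤ) + n - 2) - 1) := by
  have hexp : (k : ℤ) - (2 - n - k) = 2 * k + n - 2 := by ring
  have hT : L ^ (2 * (k : ℤ) + n - 2) ≠ 1 := (one_lt_zpow₀ hL (by omega)).ne'
  simp only [deriv_const_mul_zpow_add_const_mul_zpow_one, one_zpow, mul_one]
  rw [exists_ne_zero_zpow_comb_iff (by positivity) (hexp ▸ hT), hexp,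
    show ((k : ℤ) : ℝ) - ((2 - n - k : ℤ) : ℝ) * L ^ (2 * (k : ℤ) + n - 2) =
        k + (n + k - 2) * L ^ (2 * (k : ℤ) + n - 2) by push_cast; ring]
end

section
/- Let n ≥ 3 and k ≥ 0 be integers, let L > 1 be real, and let H : ℝ^n → ℝ be a smooth function, positively homogeneous of degree k (H(t·x) = t^k·H(x) for all t > 0) and harmonic on ℝ^n (the sum of its second partial derivatives ∂²H/∂x_i² vanishes everywhere). Define f(x) = L^{2−n−k}·H(x) − L^k·‖x‖^{2−n−2k}·H(x) and σ = (k + (n+k−2)·L^{2k+n−2})/(L^{2k+n−2} − 1). Then: (i) f is harmonic on the open annulus {x : 1 < ‖x‖ < L} (its sum of second partial derivatives vanishes there); (ii) f(x) = 0 whenever ‖x‖ = L; and (iii) for every x with ‖x‖ = 1, the directional derivative of f at x in the direction x equals −σ·f(x). -/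
open Real Filter
open scoped RealInnerProductSpace


/-- The sum of second partial derivatives (Euclidean Laplacian) of a function
`f : ℝⁿ → ℝ` at a point `x`. -/
noncomputable def laplacianSum (n : ℕ) (f : EuclideanSpace ℝ (Fin n) → ℝ)
    (x : EuclideanSpace ℝ (Fin n)) : ℝ :=
  ∑ i : Fin n,
    fderiv ℝ (fun y => fderiv ℝ f y (EuclideanSpace.single i 1)) x
      (EuclideanSpace.single i 1)

section AuxSteklov

variable {n : ℕ}

/-- Euler's identity for positively homogeneous functions. -/
lemma euler_id {k : ℕ} {H : EuclideanSpace ℝ (Fin n) → ℝ} (hsmooth : ContDiff ℝ (⊤ : ℕ∞) H)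
    (hhom : ∀ t : ℝ, 0 < t → ∀ x, H (t • x) = t ^ k * H x) (x : EuclideanSpace ℝ (Fin n)) :
    fderiv ℝ H x x = k * H x := by
  have hc : HasDerivAt (fun t : ℝ => t • x) x 1 := by
    simpa using (hasDerivAt_id (1 : ℝ)).smul_const x
  have hH : HasFDerivAt H (fderiv ℝ H x) ((1 : ℝ) • x) := by
    simpa using ((hsmooth.differentiable (by simp)) x).hasFDerivAt
  have h1 : HasDerivAt (fun t : ℝ => H (t • x)) (fderiv ℝ H x x) 1 := by
    exact hH.comp_hasDerivAt 1 hc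
  have heq : (fun t : ℝ => t ^ k * H x) =ᶠ[nhds 1] fun t => H (t • x) := by
    filter_upwards [eventually_gt_nhds zero_lt_one] with t ht
    rw [hhom t ht]
  have h2 : HasDerivAt (fun t : ℝ => t ^ k * H x) ((k : ℝ) * 1 ^ (k - 1) * H x) 1 := by
    simpa using (hasDerivAt_pow k (1 : ℝ)).mul_const (H x)
  have := (h1.congr_of_eventuallyEq heq).unique h2
  simpa using this

lemma hasFDerivAt_G {β : ℝ} {H : EuclideanSpace ℝ (Fin n) → ℝ} (hsmooth : ContDiff ℝ (⊤ : ℕ∞) H)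
    {x : EuclideanSpace ℝ (Fin n)} (hx : x ≠ 0) :
    HasFDerivAt (fun y : EuclideanSpace ℝ (Fin n) => (‖y‖ ^ 2) ^ β * H y)
      (((‖x‖ ^ 2) ^ β) • fderiv ℝ H x
        + H x • ((β * (‖x‖ ^ 2) ^ (β - 1)) • (2 • innerSL ℝ x))) x := by
  have hq : (‖x‖ ^ 2 : ℝ) ≠ 0 := by
    have := norm_pos_iff.mpr hx
    positivity
  have hφ : HasFDerivAt (fun y : EuclideanSpace ℝ (Fin n) => (‖y‖ ^ 2) ^ β)
      ((β * (‖x‖ ^ 2) ^ (β - 1)) • (2 • innerSL ℝ x)) x :=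
    (hasStrictFDerivAt_norm_sq x).hasFDerivAt.rpow_const (Or.inl hq)
  exact hφ.mul ((hsmooth.differentiable (by simp)) x).hasFDerivAt

lemma hasFDerivAt_gtilde {a c β : ℝ} {H : EuclideanSpace ℝ (Fin n) → ℝ}
    (hsmooth : ContDiff ℝ (⊤ : ℕ∞) H) {x : EuclideanSpace ℝ (Fin n)} (hx : x ≠ 0) :
    HasFDerivAt (fun y : EuclideanSpace ℝ (Fin n) => a * H y - c * ((‖y‖ ^ 2) ^ β * H y))
      (a • fderiv ℝ H x
        - c • (((‖x‖ ^ 2) ^ β) • fderiv ℝ H x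
            + H x • ((β * (‖x‖ ^ 2) ^ (β - 1)) • (2 • innerSL ℝ x)))) x :=
  (((hsmooth.differentiable (by simp)) x).hasFDerivAt.const_mul a).sub
    ((hasFDerivAt_G hsmooth hx).const_mul c)

lemma fderiv_gtilde_apply {a c β : ℝ} {H : EuclideanSpace ℝ (Fin n) → ℝ}
    (hsmooth : ContDiff ℝ (⊤ : ℕ∞) H) {x : EuclideanSpace ℝ (Fin n)} (hx : x ≠ 0)
    (v : EuclideanSpace ℝ (Fin n)) :
    fderiv ℝ (fun y : EuclideanSpace ℝ (Fin n) => a * H y - c * ((‖y‖ ^ 2) ^ β * H y)) x v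
      = a * fderiv ℝ H x v
        - c * ((‖x‖ ^ 2) ^ β * fderiv ℝ H x v
            + H x * (β * (‖x‖ ^ 2) ^ (β - 1) * (2 * ⟪x, v⟫))) := by
  rw [(hasFDerivAt_gtilde hsmooth hx).fderiv]
  simp [ContinuousLinearMap.sub_apply, ContinuousLinearMap.add_apply,
    ContinuousLinearMap.smul_apply, innerSL_apply_apply, smul_eq_mul]
  ring

lemma second_deriv_gtilde {a c β : ℝ} {H : EuclideanSpace ℝ (Fin n) → ℝ}
    (hsmooth : ContDiff ℝ (⊤ : ℕ∞) H) {x : EuclideanSpace ℝ (Fin n)} (hx : x ≠ 0)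
    (v : EuclideanSpace ℝ (Fin n)) :
    fderiv ℝ (fun y =>
        fderiv ℝ (fun z : EuclideanSpace ℝ (Fin n) =>
          a * H z - c * ((‖z‖ ^ 2) ^ β * H z)) y v) x v
      = a * fderiv ℝ (fun y => fderiv ℝ H y v) x v
        - c * ((‖x‖ ^ 2) ^ β * fderiv ℝ (fun y => fderiv ℝ H y v) x v
            + 4 * β * (‖x‖ ^ 2) ^ (β - 1) * ⟪x, v⟫ * fderiv ℝ H x v
            + 2 * β * (‖x‖ ^ 2) ^ (β - 1) * ⟪v, v⟫ * H x
            + 4 * β * (β - 1) * (‖x‖ ^ 2) ^ (β - 1 - 1) * ⟪x, v⟫ ^ 2 * H x) := by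
  have hq : (‖x‖ ^ 2 : ℝ) ≠ 0 := by
    have := norm_pos_iff.mpr hx
    positivity
  have hDHv : ContDiff ℝ (⊤ : ℕ∞) (fun y : EuclideanSpace ℝ (Fin n) => fderiv ℝ H y v) :=
    (hsmooth.fderiv_right (by simp)).clm_apply contDiff_const
  have hA : HasFDerivAt (fun y : EuclideanSpace ℝ (Fin n) => fderiv ℝ H y v)
      (fderiv ℝ (fun y : EuclideanSpace ℝ (Fin n) => fderiv ℝ H y v) x) x :=
    ((hDHv.differentiable (by simp)) x).hasFDerivAt
  have hφ : HasFDerivAt (fun y : EuclideanSpace ℝ (Fin n) => (‖y‖ ^ 2) ^ β)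
      ((β * (‖x‖ ^ 2) ^ (β - 1)) • (2 • innerSL ℝ x)) x :=
    (hasStrictFDerivAt_norm_sq x).hasFDerivAt.rpow_const (Or.inl hq)
  have hψ : HasFDerivAt (fun y : EuclideanSpace ℝ (Fin n) => (‖y‖ ^ 2) ^ (β - 1))
      (((β - 1) * (‖x‖ ^ 2) ^ (β - 1 - 1)) • (2 • innerSL ℝ x)) x :=
    (hasStrictFDerivAt_norm_sq x).hasFDerivAt.rpow_const (Or.inl hq)
  have hι : HasFDerivAt (fun y : EuclideanSpace ℝ (Fin n) => 2 * (innerSL ℝ v) y)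
      ((2 : ℝ) • (innerSL ℝ v)) x := (innerSL ℝ v).hasFDerivAt.const_mul 2
  have hu := (hψ.mul hι).const_mul β
  have hB1 := hφ.mul hA
  have hB2 := ((hsmooth.differentiable (by simp)) x).hasFDerivAt.mul hu
  have hΦ := (hA.const_mul a).sub ((hB1.add hB2).const_mul c)
  have hev : (fun y : EuclideanSpace ℝ (Fin n) =>
      fderiv ℝ (fun z : EuclideanSpace ℝ (Fin n) =>
        a * H z - c * ((‖z‖ ^ 2) ^ β * H z)) y v)
      =ᶠ[nhds x] (fun y : EuclideanSpace ℝ (Fin n) =>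
        a * fderiv ℝ H y v
          - c * ((‖y‖ ^ 2) ^ β * fderiv ℝ H y v
            + H y * (β * ((‖y‖ ^ 2) ^ (β - 1) * (2 * (innerSL ℝ v) y))))) := by
    filter_upwards [eventually_ne_nhds hx] with y hy
    rw [fderiv_gtilde_apply hsmooth hy v]
    simp only [innerSL_apply_apply]
    rw [real_inner_comm v y]
    ring
  rw [hev.fderiv_eq]
  erw [hΦ.fderiv]
  simp only [ContinuousLinearMap.sub_apply, ContinuousLinearMap.add_apply,
    ContinuousLinearMap.smul_apply, innerSL_apply_apply, smul_eq_mul, Pi.mul_apply]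
  rw [real_inner_comm v x]
  ring

lemma inner_single_one (x : EuclideanSpace ℝ (Fin n)) (i : Fin n) :
    ⟪x, EuclideanSpace.single i (1 : ℝ)⟫ = x i := by
  rw [EuclideanSpace.inner_single_right]
  simp

lemma single_inner_single (i : Fin n) :
    ⟪(EuclideanSpace.single i (1 : ℝ) : EuclideanSpace ℝ (Fin n)),
      EuclideanSpace.single i (1 : ℝ)⟫ = 1 := by
  rw [EuclideanSpace.inner_single_right]
  simp

lemma sum_coord_sq (x : EuclideanSpace ℝ (Fin n)) :
    ∑ i : Fin n, (x i) ^ 2 = ‖x‖ ^ 2 := by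
  rw [← real_inner_self_eq_norm_sq, PiLp.inner_apply]
  simp [sq]

lemma sum_single_smul (x : EuclideanSpace ℝ (Fin n)) :
    ∑ i : Fin n, x i • (EuclideanSpace.single i (1 : ℝ) : EuclideanSpace ℝ (Fin n)) = x := by
  have := (EuclideanSpace.basisFun (Fin n) ℝ).sum_repr x
  simpa [EuclideanSpace.basisFun_apply, EuclideanSpace.basisFun_repr] using this

lemma sum_coord_fderiv (H : EuclideanSpace ℝ (Fin n) → ℝ) (x : EuclideanSpace ℝ (Fin n)) :
    ∑ i : Fin n, x i * fderiv ℝ H x (EuclideanSpace.single i (1 : ℝ)) = fderiv ℝ H x x := by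
  have h : fderiv ℝ H x (∑ i : Fin n, x i •
      (EuclideanSpace.single i (1 : ℝ) : EuclideanSpace ℝ (Fin n)))
      = ∑ i : Fin n, x i * fderiv ℝ H x (EuclideanSpace.single i (1 : ℝ)) := by
    rw [map_sum]
    simp [smul_eq_mul]
  rw [sum_single_smul] at h
  exact h.symm

lemma laplacianSum_gtilde {a c β : ℝ} {H : EuclideanSpace ℝ (Fin n) → ℝ}
    (hsmooth : ContDiff ℝ (⊤ : ℕ∞) H) {x : EuclideanSpace ℝ (Fin n)} (hx : x ≠ 0) :
    laplacianSum n (fun y => a * H y - c * ((‖y‖ ^ 2) ^ β * H y)) x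
      = a * laplacianSum n H x
        - c * ((‖x‖ ^ 2) ^ β * laplacianSum n H x
            + 4 * β * (‖x‖ ^ 2) ^ (β - 1) * fderiv ℝ H x x
            + 2 * β * (‖x‖ ^ 2) ^ (β - 1) * n * H x
            + 4 * β * (β - 1) * (‖x‖ ^ 2) ^ (β - 1 - 1) * (‖x‖ ^ 2) * H x) := by
  unfold laplacianSum
  rw [Finset.sum_congr rfl
    (fun i _ => second_deriv_gtilde hsmooth hx (EuclideanSpace.single i 1))]
  simp only [inner_single_one, EuclideanSpace.single_apply, eq_self_iff_true, if_true]
  have key : ∀ i : Fin n,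
      a * fderiv ℝ (fun y => fderiv ℝ H y (EuclideanSpace.single i 1)) x
          (EuclideanSpace.single i 1)
        - c * ((‖x‖ ^ 2) ^ β *
              fderiv ℝ (fun y => fderiv ℝ H y (EuclideanSpace.single i 1)) x
                (EuclideanSpace.single i 1)
            + 4 * β * (‖x‖ ^ 2) ^ (β - 1) * x i *
                fderiv ℝ H x (EuclideanSpace.single i 1)
            + 2 * β * (‖x‖ ^ 2) ^ (β - 1) * 1 * H x
            + 4 * β * (β - 1) * (‖x‖ ^ 2) ^ (β - 1 - 1) * (x i) ^ 2 * H x)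
      = (a - c * (‖x‖ ^ 2) ^ β) *
            fderiv ℝ (fun y => fderiv ℝ H y (EuclideanSpace.single i 1)) x
              (EuclideanSpace.single i 1)
          - (c * (4 * β * (‖x‖ ^ 2) ^ (β - 1))) *
              (x i * fderiv ℝ H x (EuclideanSpace.single i 1))
          - (c * (4 * β * (β - 1) * (‖x‖ ^ 2) ^ (β - 1 - 1) * H x)) * (x i) ^ 2
          - (c * (2 * β * (‖x‖ ^ 2) ^ (β - 1) * H x)) := fun i => by ring
  rw [Finset.sum_congr rfl (fun i _ => key i)]
  simp only [Finset.sum_sub_distrib, ← Finset.mul_sum, ← Finset.sum_mul,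
    Finset.sum_const, Finset.card_univ, Fintype.card_fin, nsmul_eq_mul]
  rw [sum_coord_fderiv, sum_coord_sq]
  ring

lemma norm_zpow_eq {y : EuclideanSpace ℝ (Fin n)} (hy : y ≠ 0) (m : ℤ) :
    (‖y‖ : ℝ) ^ m = (‖y‖ ^ 2) ^ ((m : ℝ) / 2) := by
  have h : (0 : ℝ) < ‖y‖ := norm_pos_iff.mpr hy
  have h2 : ((‖y‖ : ℝ) ^ 2) ^ ((m : ℝ) / 2) = ‖y‖ ^ ((m : ℝ)) := by
    rw [← Real.rpow_natCast ‖y‖ 2, ← Real.rpow_mul h.le]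
    congr 1
    push_cast
    ring
  rw [h2, Real.rpow_intCast]

end AuxSteklov

/-- Explicit eigenfunction for the mixed Steklov–Dirichlet problem on the
annulus `{1 < ‖x‖ < L} ⊂ ℝⁿ`: with `H` a smooth harmonic function, positively
homogeneous of degree `k`, the function
`f(x) = L^(2−n−k)·H(x) − L^k·‖x‖^(2−n−2k)·H(x)` is harmonic on the annulus,
vanishes on the outer sphere `‖x‖ = L`, and on the inner sphere `‖x‖ = 1` its
radial directional derivative satisfies `Df(x)(x) = −σ·f(x)` with
`σ = (k + (n+k−2)·L^(2k+n−2)) / (L^(2k+n−2) − 1)`. -/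
theorem stmt_13 (n k : ℕ) (hn : 3 ≤ n) (L : ℝ) (hL : 1 < L)
    (H : EuclideanSpace ℝ (Fin n) → ℝ)
    (hsmooth : ContDiff ℝ (⊤ : ℕ∞) H)
    (hhom : ∀ t : ℝ, 0 < t → ∀ x, H (t • x) = t ^ k * H x)
    (hharm : ∀ x, laplacianSum n H x = 0)
    (f : EuclideanSpace ℝ (Fin n) → ℝ)
    (hf : f = fun x =>
      L ^ ((2 : ℤ) - n - k) * H x - L ^ k * ‖x‖ ^ ((2 : ℤ) - n - 2 * k) * H x)
    (σ : ℝ)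
    (hσ : σ = ((k : ℝ) + ((n : ℝ) + k - 2) * L ^ (2 * (k : ℤ) + n - 2)) /
        (L ^ (2 * (k : ℤ) + n - 2) - 1)) :
    (∀ x : EuclideanSpace ℝ (Fin n), 1 < ‖x‖ → ‖x‖ < L → laplacianSum n f x = 0) ∧
    (∀ x : EuclideanSpace ℝ (Fin n), ‖x‖ = L → f x = 0) ∧
    (∀ x : EuclideanSpace ℝ (Fin n), ‖x‖ = 1 → fderiv ℝ f x x = -σ * f x) := by
  have hL0 : (0 : ℝ) < L := lt_trans one_pos hL
  set β : ℝ := ((2 : ℝ) - n - 2 * k) / 2 with hβ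
  have hcast : ((((2 : ℤ) - n - 2 * k) : ℤ) : ℝ) / 2 = β := by
    rw [hβ]; push_cast; ring
  set g : EuclideanSpace ℝ (Fin n) → ℝ := fun y =>
    L ^ ((2 : ℤ) - n - k) * H y - L ^ k * ((‖y‖ ^ 2) ^ β * H y) with hg
  have hfg : ∀ y : EuclideanSpace ℝ (Fin n), y ≠ 0 → f y = g y := by
    intro y hy
    rw [hf, hg]
    simp only
    rw [norm_zpow_eq hy ((2 : ℤ) - n - 2 * k), hcast]
    ring
  refine ⟨?_, ?_, ?_⟩
  · -- harmonic on the annulus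
    intro x hx1 _
    have hx0 : x ≠ 0 := by
      intro h; rw [h] at hx1; simp at hx1
      linarith
    have hlapeq : laplacianSum n f x = laplacianSum n g x := by
      unfold laplacianSum
      refine Finset.sum_congr rfl fun i _ => ?_
      have hev : (fun y => fderiv ℝ f y (EuclideanSpace.single i 1))
          =ᶠ[nhds x] (fun y => fderiv ℝ g y (EuclideanSpace.single i 1)) := by
        filter_upwards [eventually_ne_nhds hx0] with y hy
        have hev2 : f =ᶠ[nhds y] g := by
          filter_upwards [eventually_ne_nhds hy] with z hz
          exact hfg z hz
        rw [hev2.fderiv_eq]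
      rw [hev.fderiv_eq]
    rw [hlapeq, hg, laplacianSum_gtilde hsmooth hx0, hharm, euler_id hsmooth hhom x]
    have hq0 : (0 : ℝ) < ‖x‖ ^ 2 := by
      have : (0 : ℝ) < ‖x‖ := lt_trans one_pos hx1
      positivity
    have hqq : ((‖x‖ : ℝ) ^ 2) ^ (β - 1 - 1) * ((‖x‖ : ℝ) ^ 2) ^ (1 : ℝ)
        = ((‖x‖ : ℝ) ^ 2) ^ (β - 1) := by
      rw [← Real.rpow_add hq0]; norm_num
    rw [Real.rpow_one] at hqq
    have key : 4 * β * (k : ℝ) + 2 * β * n + 4 * β * (β - 1) = 0 := by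
      rw [hβ]; ring
    linear_combination (-(L ^ k * H x) * (4 * β * (β - 1))) * hqq
      - (L ^ k * H x * ((‖x‖ : ℝ) ^ 2) ^ (β - 1)) * key
  · -- vanishes on the outer sphere
    intro x hxL
    rw [hf]
    simp only
    rw [hxL]
    have hkey : (L : ℝ) ^ k * L ^ ((2 : ℤ) - n - 2 * k) = L ^ ((2 : ℤ) - n - k) := by
      rw [← zpow_natCast L k, ← zpow_add₀ (ne_of_gt hL0)]
      congr 1
      ring
    rw [hkey]
    ring
  · -- Steklov condition on the inner sphere
    intro x hx1
    have hx0 : x ≠ 0 := by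
      intro h; rw [h] at hx1; simp at hx1
    have hev : f =ᶠ[nhds x] g := by
      filter_upwards [eventually_ne_nhds hx0] with z hz
      exact hfg z hz
    rw [hev.fderiv_eq, hg, fderiv_gtilde_apply hsmooth hx0 x,
      euler_id hsmooth hhom x, real_inner_self_eq_norm_sq, hx1, hf]
    simp only
    rw [hx1, one_zpow]
    simp only [one_pow, Real.one_rpow]
    have hM1 : (1 : ℝ) < L ^ (2 * (k : ℤ) + n - 2) := by
      refine one_lt_zpow₀ hL ?_
      have h3 : (3 : ℤ) ≤ (n : ℤ) := by exact_mod_cast hn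
      omega
    have hMne : (L : ℝ) ^ (2 * (k : ℤ) + n - 2) - 1 ≠ 0 :=
      sub_ne_zero.mpr (ne_of_gt hM1)
    have hcaM : (L : ℝ) ^ k = L ^ ((2 : ℤ) - n - k) * L ^ (2 * (k : ℤ) + n - 2) := by
      rw [← zpow_natCast L k, ← zpow_add₀ (ne_of_gt hL0)]
      congr 1
      ring
    rw [hσ, hcaM, hβ]
    field_simp
    ring
end

section
/- Let n ≥ 3 and k ≥ 0 be integers, let L > 1 be real, and let H : ℝ^n → ℝ be a smooth function, positively homogeneous of degree k (H(t·x) = t^k·H(x) for all t > 0) and harmonic on ℝ^n (the sum of its second partial derivatives ∂²H/∂x_i² vanishes everywhere). Define f(x) = (n+k−2)·L^{−(k+n−1)}·H(x) + k·L^{k−1}·‖x‖^{2−n−2k}·H(x) and σ = k·(n+k−2)·(L^{n+2k−2} − 1)/(k·L^{n+2k−2} + (n+k−2)). Then: (i) f is harmonic on the open annulus {x : 1 < ‖x‖ < L} (its sum of second partial derivatives vanishes there); (ii) for every x with ‖x‖ = L, the directional derivative of f at x in the direction x equals 0; and (iii) for every x with ‖x‖ = 1, the directional derivative of f at x in the direction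 x equals −σ·f(x). -/
open Filter Real

lemma euler_aux {n k : ℕ} {H : EuclideanSpace ℝ (Fin n) → ℝ}
    (hsmooth : ContDiff ℝ (⊤ : ℕ∞) H)
    (hhom : ∀ t : ℝ, 0 < t → ∀ x, H (t • x) = t ^ k * H x)
    (x : EuclideanSpace ℝ (Fin n)) :
    fderiv ℝ H x x = k * H x := by
  have hd : HasDerivAt (fun t : ℝ => t • x) ((1:ℝ) • x) 1 :=
    (hasDerivAt_id 1).smul_const x
  have h1 : HasDerivAt (fun t : ℝ => H (t • x)) (fderiv ℝ H x x) 1 := by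
    have hH : HasFDerivAt H (fderiv ℝ H ((1:ℝ) • x)) ((1:ℝ) • x) :=
      (hsmooth.differentiable (by simp) _).hasFDerivAt
    have := hH.comp_hasDerivAt 1 hd
    simpa [one_smul, Function.comp_def] using this
  have h2 : HasDerivAt (fun t : ℝ => t ^ k * H x) ((k * 1 ^ (k-1)) * H x) 1 :=
    (hasDerivAt_pow k 1).mul_const (H x)
  have heq : (fun t : ℝ => t ^ k * H x) =ᶠ[nhds 1] fun t => H (t • x) := by
    filter_upwards [eventually_gt_nhds (by norm_num : (0:ℝ) < 1)] with t ht
    exact (hhom t ht x).symm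
  have := h1.unique (h2.congr_of_eventuallyEq heq.symm)
  rw [this]; simp

lemma euler_sum {n k : ℕ} {H : EuclideanSpace ℝ (Fin n) → ℝ}
    (hsmooth : ContDiff ℝ (⊤ : ℕ∞) H)
    (hhom : ∀ t : ℝ, 0 < t → ∀ x, H (t • x) = t ^ k * H x)
    (x : EuclideanSpace ℝ (Fin n)) :
    ∑ i, x i * fderiv ℝ H x (EuclideanSpace.single i 1) = k * H x := by
  have hx : ∑ i, x i • (EuclideanSpace.single i (1:ℝ)) = x := by
    have := (EuclideanSpace.basisFun (Fin n) ℝ).sum_repr x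
    simpa [EuclideanSpace.basisFun_apply, EuclideanSpace.basisFun_repr] using this
  calc ∑ i, x i * fderiv ℝ H x (EuclideanSpace.single i 1)
      = fderiv ℝ H x (∑ i, x i • EuclideanSpace.single i 1) := by
        rw [map_sum]; simp
    _ = k * H x := by rw [hx]; exact euler_aux hsmooth hhom x

/-- Explicit eigenfunction for the mixed Steklov–Neumann problem on the annulus
`{1 < ‖x‖ < L} ⊂ ℝⁿ`: with `H` a smooth harmonic function, positively
homogeneous of degree `k`, the function
`f(x) = (n+k−2)·L^(−(k+n−1))·H(x) + k·L^(k−1)·‖x‖^(2−n−2k)·H(x)` is harmonic on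
the annulus, its radial directional derivative `Df(x)(x)` vanishes on the outer
sphere `‖x‖ = L`, and on the inner sphere `‖x‖ = 1` it satisfies
`Df(x)(x) = −σ·f(x)` with
`σ = k·(n+k−2)·(L^(n+2k−2) − 1) / (k·L^(n+2k−2) + (n+k−2))`. -/
theorem stmt_14 (n k : ℕ) (hn : 3 ≤ n) (L : ℝ) (hL : 1 < L)
    (H : EuclideanSpace ℝ (Fin n) → ℝ)
    (hsmooth : ContDiff ℝ (⊤ : ℕ∞) H)
    (hhom : ∀ t : ℝ, 0 < t → ∀ x, H (t • x) = t ^ k * H x)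
    (hharm : ∀ x, laplacianSum n H x = 0)
    (f : EuclideanSpace ℝ (Fin n) → ℝ)
    (hf : f = fun x =>
      ((n : ℝ) + k - 2) * L ^ (-((k : ℤ) + n - 1)) * H x +
        (k : ℝ) * L ^ ((k : ℤ) - 1) * ‖x‖ ^ ((2 : ℤ) - n - 2 * k) * H x)
    (σ : ℝ)
    (hσ : σ = (k : ℝ) * ((n : ℝ) + k - 2) * (L ^ ((n : ℤ) + 2 * k - 2) - 1) /
        ((k : ℝ) * L ^ ((n : ℤ) + 2 * k - 2) + ((n : ℝ) + k - 2))) :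
    (∀ x : EuclideanSpace ℝ (Fin n), 1 < ‖x‖ → ‖x‖ < L → laplacianSum n f x = 0) ∧
    (∀ x : EuclideanSpace ℝ (Fin n), ‖x‖ = L → fderiv ℝ f x x = 0) ∧
    (∀ x : EuclideanSpace ℝ (Fin n), ‖x‖ = 1 → fderiv ℝ f x x = -σ * f x) := by
  have hL0 : (0:ℝ) < L := lt_trans one_pos hL
  set s : ℝ := (2 - (n:ℝ) - 2*k)/2 with hs
  set c1 : ℝ := ((n:ℝ) + k - 2) * L ^ (-((k:ℤ) + n - 1)) with hc1
  set c2 : ℝ := (k:ℝ) * L ^ ((k:ℤ) - 1) with hc2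
  set P : EuclideanSpace ℝ (Fin n) → ℝ := fun y => ((‖y‖:ℝ)^2) ^ s with hPdef
  set F : EuclideanSpace ℝ (Fin n) → ℝ := fun y => (c1 + c2 * P y) * H y with hFdef
  -- conversion zpow → rpow
  have hconv : ∀ y : EuclideanSpace ℝ (Fin n), y ≠ 0 →
      (‖y‖:ℝ) ^ ((2:ℤ) - n - 2*k) = P y := by
    intro y hy
    have h0 : (0:ℝ) < ‖y‖ := norm_pos_iff.2 hy
    have h1 : P y = ‖y‖ ^ (((2:ℕ):ℝ) * s) := by
      show ((‖y‖:ℝ)^2) ^ s = _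
      rw [show ((‖y‖:ℝ)^2) = ‖y‖ ^ (((2:ℕ)):ℝ) from (Real.rpow_natCast _ 2).symm,
        ← Real.rpow_mul h0.le]
    rw [h1, show (((2:ℕ):ℝ) * s) = ((((2:ℤ) - n - 2*k) : ℤ) : ℝ) by push_cast [hs]; ring,
      Real.rpow_intCast]
  have hfF : ∀ y : EuclideanSpace ℝ (Fin n), y ≠ 0 → f y = F y := by
    intro y hy
    rw [hf, hFdef]
    simp only [← hconv y hy]
    ring
  -- positivity of ‖y‖²
  have hQpos : ∀ y : EuclideanSpace ℝ (Fin n), y ≠ 0 → (0:ℝ) < ‖y‖^2 := by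
    intro y hy
    have h0 : (0:ℝ) < ‖y‖ := norm_pos_iff.2 hy
    positivity
  -- derivative of P
  have hPd : ∀ y : EuclideanSpace ℝ (Fin n), y ≠ 0 →
      HasFDerivAt P ((s * ((‖y‖:ℝ)^2)^(s-1)) • (2 • innerSL ℝ y)) y := by
    intro y hy
    exact ((hasStrictFDerivAt_norm_sq y).hasFDerivAt).rpow_const
      (Or.inl (ne_of_gt (hQpos y hy)))
  have hHd : ∀ y : EuclideanSpace ℝ (Fin n), HasFDerivAt H (fderiv ℝ H y) y :=
    fun y => (hsmooth.differentiable (by simp) y).hasFDerivAt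
  have hFd : ∀ y : EuclideanSpace ℝ (Fin n), (hy : y ≠ 0) →
      HasFDerivAt F ((c1 + c2 * P y) • fderiv ℝ H y +
        H y • (c2 • ((s * ((‖y‖:ℝ)^2)^(s-1)) • (2 • innerSL ℝ y)))) y := by
    intro y hy
    exact (((hPd y hy).const_mul c2).const_add c1).mul (hHd y)
  have hfd : ∀ y : EuclideanSpace ℝ (Fin n), y ≠ 0 →
      fderiv ℝ f y = (c1 + c2 * P y) • fderiv ℝ H y +
        H y • (c2 • ((s * ((‖y‖:ℝ)^2)^(s-1)) • (2 • innerSL ℝ y))) := by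
    intro y hy
    have hev : f =ᶠ[nhds y] F := by
      filter_upwards [eventually_ne_nhds hy] with z hz using hfF z hz
    rw [hev.fderiv_eq, (hFd y hy).fderiv]
  -- radial derivative formula
  have hrad : ∀ y : EuclideanSpace ℝ (Fin n), y ≠ 0 →
      fderiv ℝ f y y = (c1 + c2 * P y) * (k * H y) +
        H y * (c2 * (s * ((‖y‖:ℝ)^2)^(s-1) * (2 * ‖y‖^2))) := by
    intro y hy
    rw [hfd y hy]
    simp only [ContinuousLinearMap.add_apply, ContinuousLinearMap.smul_apply,
      smul_eq_mul, innerSL_apply_apply, real_inner_self_eq_norm_sq]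
    rw [euler_aux hsmooth hhom y]
    ring
  refine ⟨?_, ?_, ?_⟩
  · -- harmonicity
    intro x hx1 hxL
    have hx0 : x ≠ 0 := by
      intro h; rw [h, norm_zero] at hx1; linarith
    have hQ := hQpos x hx0
    set Q : ℝ := (‖x‖:ℝ)^2 with hQdef
    set A : ℝ := c1 + c2 * P x with hAdef
    set e : Fin n → EuclideanSpace ℝ (Fin n) := fun i => EuclideanSpace.single i 1 with he
    set dH : Fin n → ℝ := fun i => fderiv ℝ H x (e i) with hdH
    set ddH : Fin n → ℝ := fun i => fderiv ℝ (fun y => fderiv ℝ H y (e i)) x (e i) with hddH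
    -- second derivative of f in direction i
    have key : ∀ i : Fin n,
        fderiv ℝ (fun y => fderiv ℝ f y (e i)) x (e i) =
          (c2 * (s * Q^(s-1) * 2 * x i)) * dH i + A * ddH i +
          (2*s*c2) * (H x * (((s-1) * Q^(s-1-1)) * (2 * x i) * x i + Q^(s-1) * 1)
            + (Q^(s-1) * x i) * dH i) := by
      intro i
      -- G i : explicit form of y ↦ fderiv f y (e i) near x
      have hHi : HasFDerivAt (fun y => fderiv ℝ H y (e i))
          (fderiv ℝ (fun y => fderiv ℝ H y (e i)) x) x := by
        have : ContDiff ℝ (⊤ : ℕ∞) (fun y => fderiv ℝ H y (e i)) :=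
          (hsmooth.fderiv_right (by simp)).clm_apply contDiff_const
        exact (this.differentiable (by simp) x).hasFDerivAt
      have hRd : HasFDerivAt (fun y : EuclideanSpace ℝ (Fin n) => ((‖y‖:ℝ)^2)^(s-1))
          (((s-1) * Q^(s-1-1)) • (2 • innerSL ℝ x)) x :=
        ((hasStrictFDerivAt_norm_sq x).hasFDerivAt).rpow_const (Or.inl (ne_of_gt hQ))
      have hcoord : HasFDerivAt (fun y : EuclideanSpace ℝ (Fin n) => y i)
          (EuclideanSpace.proj (𝕜 := ℝ) i) x :=
        (EuclideanSpace.proj (𝕜 := ℝ) i).hasFDerivAt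
      have hGd : HasFDerivAt
          (fun y : EuclideanSpace ℝ (Fin n) => (c1 + c2 * P y) * (fderiv ℝ H y (e i)) +
            (2*s*c2) * (H y * (((‖y‖:ℝ)^2)^(s-1) * y i)))
          (((c1 + c2 * P x) • fderiv ℝ (fun y => fderiv ℝ H y (e i)) x +
             (fderiv ℝ H x (e i)) • (c2 • ((s * Q^(s-1)) • (2 • innerSL ℝ x)))) +
           (2*s*c2) • (H x • (Q^(s-1) • (EuclideanSpace.proj (𝕜 := ℝ) i) +
              (x i) • (((s-1) * Q^(s-1-1)) • (2 • innerSL ℝ x))) +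
            (Q^(s-1) * x i) • fderiv ℝ H x)) x := by
        exact ((((hPd x hx0).const_mul c2).const_add c1).mul hHi).add
          (((hHd x).mul (hRd.mul hcoord)).const_mul (2*s*c2))
      have hev : (fun y => fderiv ℝ f y (e i)) =ᶠ[nhds x]
          (fun y : EuclideanSpace ℝ (Fin n) => (c1 + c2 * P y) * (fderiv ℝ H y (e i)) +
            (2*s*c2) * (H y * (((‖y‖:ℝ)^2)^(s-1) * y i))) := by
        filter_upwards [eventually_ne_nhds hx0] with z hz
        rw [hfd z hz]
        simp only [ContinuousLinearMap.add_apply, ContinuousLinearMap.smul_apply,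
          smul_eq_mul, innerSL_apply_apply, he, EuclideanSpace.inner_single_right,
          conj_trivial]
        push_cast
        ring
      rw [hev.fderiv_eq, hGd.fderiv]
      simp only [ContinuousLinearMap.add_apply, ContinuousLinearMap.smul_apply,
        smul_eq_mul, innerSL_apply_apply, he, EuclideanSpace.inner_single_right,
        conj_trivial, PiLp.proj_apply, EuclideanSpace.single_apply, if_pos rfl]
      push_cast
      simp only [hdH, hddH, hAdef, he]
      ring
    rw [laplacianSum]
    rw [Finset.sum_congr rfl (fun i _ => key i)]
    have hsum1 : ∑ i, x i * dH i = k * H x := by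
      simpa [hdH, he] using euler_sum hsmooth hhom x
    have hsum2 : ∑ i, ddH i = 0 := by
      simpa [laplacianSum, hddH, he] using hharm x
    have hsum3 : ∑ i, x i * x i = Q := by
      rw [hQdef, ← real_inner_self_eq_norm_sq]
      simp only [PiLp.inner_apply, RCLike.inner_apply, conj_trivial]
    have hQQ : Q^(s-1-1) * Q = Q^(s-1) := by
      nth_rewrite 2 [← Real.rpow_one Q]
      rw [← Real.rpow_add hQ]
      norm_num
    have h2s0 : 2*(k:ℝ) + 2*s - 2 + n = 0 := by rw [hs]; ring
    calc ∑ i, ((c2 * (s * Q^(s-1) * 2 * x i)) * dH i + A * ddH i +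
          (2*s*c2) * (H x * (((s-1) * Q^(s-1-1)) * (2 * x i) * x i + Q^(s-1) * 1)
            + (Q^(s-1) * x i) * dH i))
        = ∑ i, ((c2*s*Q^(s-1)*2 + 2*s*c2*Q^(s-1)) * (x i * dH i) + A * ddH i +
            (4*s*c2*(s-1)*Q^(s-1-1)*H x) * (x i * x i) + 2*s*c2*(H x)*Q^(s-1)) := by
          apply Finset.sum_congr rfl; intros; ring
      _ = (c2*s*Q^(s-1)*2 + 2*s*c2*Q^(s-1)) * (∑ i, x i * dH i) + A * (∑ i, ddH i) +
            (4*s*c2*(s-1)*Q^(s-1-1)*H x) * (∑ i, x i * x i) +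
            (n:ℝ) * (2*s*c2*(H x)*Q^(s-1)) := by
          simp [Finset.sum_add_distrib, Finset.mul_sum, Finset.sum_const, Finset.card_univ,
            nsmul_eq_mul]
      _ = 0 := by
          rw [hsum1, hsum2, hsum3]
          linear_combination (4*s*c2*(s-1)*H x) * hQQ + (2*s*c2*H x*Q^(s-1)) * h2s0
  · -- outer sphere
    intro x hxL
    have hx0 : x ≠ 0 := by
      intro h; rw [h, norm_zero] at hxL; linarith
    rw [hrad x hx0]
    have hPx : P x = L ^ (2*s) := by
      show ((‖x‖:ℝ)^2) ^ s = _
      rw [hxL, ← Real.rpow_natCast L 2, ← Real.rpow_mul hL0.le]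
      norm_num
    have hPx1 : ((‖x‖:ℝ)^2) ^ (s-1) = L ^ (2*s-2) := by
      rw [hxL, ← Real.rpow_natCast L 2, ← Real.rpow_mul hL0.le]
      norm_num; ring_nf
    have hn2 : ((‖x‖:ℝ)^2) = L ^ ((2:ℝ)) := by
      rw [hxL, ← Real.rpow_natCast L 2]; norm_num
    rw [hPx, hPx1, hn2, hc1, hc2,
      ← Real.rpow_intCast L (-((k:ℤ)+n-1)), ← Real.rpow_intCast L ((k:ℤ)-1),
      show ((-((k:ℤ)+n-1) : ℤ) : ℝ) = 1 - (n:ℝ) - k by push_cast; ring,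
      show ((((k:ℤ)-1) : ℤ) : ℝ) = (k:ℝ) - 1 by push_cast; ring, hs]
    have e1 : L ^ ((k:ℝ)-1) * L ^ (2*((2 - (n:ℝ) - 2*(k:ℝ))/2)) = L ^ (1-(n:ℝ)-(k:ℝ)) := by
      rw [← Real.rpow_add hL0]; ring_nf
    have e2 : L ^ (2*((2 - (n:ℝ) - 2*(k:ℝ))/2)-2) * L ^ ((2:ℝ)) = L ^ (2*((2 - (n:ℝ) - 2*(k:ℝ))/2)) := by
      rw [← Real.rpow_add hL0]; ring_nf
    linear_combination ((k:ℝ)*(k:ℝ)*H x) * e1 +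
      (2*((2 - (n:ℝ) - 2*(k:ℝ))/2)*(k:ℝ)*H x * L ^ ((k:ℝ)-1)) * e2 +
      (2*((2 - (n:ℝ) - 2*(k:ℝ))/2)*(k:ℝ)*H x) * e1
  · -- inner sphere
    intro x hx1
    have hx0 : x ≠ 0 := by
      intro h; rw [h, norm_zero] at hx1; linarith
    rw [hrad x hx0, hfF x hx0, hFdef]
    have hPx : P x = 1 := by
      show ((‖x‖:ℝ)^2) ^ s = _
      rw [hx1]; norm_num
    have hPx1 : ((‖x‖:ℝ)^2) ^ (s-1) = 1 := by
      rw [hx1]; norm_num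
    have hn2 : ((‖x‖:ℝ)^2) = 1 := by rw [hx1]; norm_num
    simp only [hPx, hPx1, hn2, Real.one_rpow]
    rw [hσ, hc1, hc2,
      ← Real.rpow_intCast L (-((k:ℤ)+n-1)), ← Real.rpow_intCast L ((k:ℤ)-1),
      ← Real.rpow_intCast L ((n:ℤ)+2*k-2),
      show ((-((k:ℤ)+n-1) : ℤ) : ℝ) = 1 - (n:ℝ) - k by push_cast; ring,
      show ((((k:ℤ)-1) : ℤ) : ℝ) = (k:ℝ) - 1 by push_cast; ring,
      show ((((n:ℤ)+2*k-2) : ℤ) : ℝ) = (n:ℝ) + 2*k - 2 by push_cast; ring, hs]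
    have hD : (k:ℝ) * L ^ ((n:ℝ)+2*k-2) + ((n:ℝ)+k-2) ≠ 0 := by
      have h1 : (0:ℝ) < L ^ ((n:ℝ)+2*k-2) := Real.rpow_pos_of_pos hL0 _
      have h2 : (0:ℝ) ≤ (k:ℝ) := Nat.cast_nonneg k
      have h3 : (3:ℝ) ≤ (n:ℝ) := by exact_mod_cast hn
      nlinarith
    have e2 : L ^ (1-(n:ℝ)-(k:ℝ)) * L ^ ((n:ℝ)+2*k-2) = L ^ ((k:ℝ)-1) := by
      rw [← Real.rpow_add hL0]; ring_nf
    rw [neg_mul, div_mul_eq_mul_div (a := (k:ℝ) * ((n:ℝ)+k-2) * (L ^ ((n:ℝ)+2*k-2) - 1)),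
      eq_neg_iff_add_eq_zero, add_div' _ _ _ hD, div_eq_zero_iff]
    left
    linear_combination (H x * (k:ℝ)*((n:ℝ)+k-2)*((n:ℝ)+2*k-2)) * e2
end
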